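/- For the complete binary tree T_h of height h (with T_0 the empty tree, T_1 a single vertex), the independence polynomials satisfy P_{T_h}(x) = P_{T_{h−1}}(x)² + x · P_{T_{h−2}}(x)⁴ for h ≥ 2, with P_{T_0}(x) = 1 and P_{T_1}(x) = 1 + x. Moreover, for h ≥ 3, P_{T_h*}(x) = P_{T_{h−2}}(x)², where T_h* is the induced subgraph on the vertices of maximum degree (degree 3). -/

import Mathlib

open scoped Classical
open Polynomial

/-- `s` is an independent set of `G`. -/
def IsIndepFinset {V : Type*} (G : SimpleGraph V) (s : Finset V) : Prop :=
  ∀ ⦃v⦄, v ∈ s → ∀ ⦃w⦄, w ∈ s → ¬ G.Adj v w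

/-- The independence polynomial of `G` restricted to independent sets contained in `A`
(so `indepPolyOn G Finset.univ` is the independence polynomial of `G`, and taking `A` to be
the set of vertices of maximum degree gives `P_{G*}`). -/
noncomputable def indepPolyOn {V : Type*} [Fintype V] (G : SimpleGraph V)
    (A : Finset V) : Polynomial ℝ :=
  ∑ s ∈ A.powerset.filter (fun s => IsIndepFinset G s), (X : Polynomial ℝ) ^ s.card

/-- The independence polynomial `P_G(x) = Σ_k i_G(k) x^k`. -/
noncomputable def indepPoly {V : Type*} [Fintype V] (G : SimpleGraph V) : Polynomial ℝ :=
  indepPolyOn G Finset.univ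

/-- The complete binary tree of height `h`, on `2^h - 1` vertices, in heap encoding:
vertex `i` represents the node numbered `i+1 ∈ {1, …, 2^h - 1}`, whose children are the
nodes numbered `2(i+1)` and `2(i+1)+1`. -/
def binTree (h : ℕ) : SimpleGraph (Fin (2 ^ h - 1)) :=
  SimpleGraph.fromRel (fun a b => (b : ℕ) + 1 = 2 * ((a : ℕ) + 1) ∨
    (b : ℕ) + 1 = 2 * ((a : ℕ) + 1) + 1)

/-!
In heap numbering, the complete subtree of height `h` rooted at node `n` consists of the `m` with
`m / 2 ^ i = n` for some `i < h`. Splitting independent sets according to whether they contain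
the root `n`: without it they are pairs of independent sets of the subtrees at `2 * n` and
`2 * n + 1`, which are disjoint with no edges between them; with it they are pairs of independent
sets of those subtrees with their roots removed, i.e. of the four subtrees at the grandchildren.
So every complete subtree of height `h` that fits in the tree has the same independence polynomial,
given by the recursion `P_{h+2} = P_{h+1}² + x P_h⁴`. In `T_{h+3}` the root has degree 2, the
leaves degree 1 and all other vertices degree 3, so the maximum-degree vertices form the two
subtrees of height `h + 1` below the root.
-/

section IndepPolyOn

variable {V : Type*} {G : SimpleGraph V}

lemma IsIndepFinset.mono {s t : Finset V} (ht : IsIndepFinset G t) (hst : s ⊆ t) :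
    IsIndepFinset G s :=
  fun _ hv _ hw => ht (hst hv) (hst hw)

lemma isIndepFinset_insert [DecidableEq V] {s : Finset V} {r : V} :
    IsIndepFinset G (insert r s) ↔ IsIndepFinset G s ∧ ∀ v ∈ s, ¬ G.Adj r v := by
  simp only [IsIndepFinset, Finset.mem_insert, forall_eq_or_imp, G.loopless.irrefl,
    not_false_eq_true, true_and]
  constructor
  · rintro ⟨hr, hs⟩
    exact ⟨fun v hv => (hs v hv).2, hr⟩
  · rintro ⟨hs, hr⟩
    exact ⟨hr, fun v hv => ⟨fun hvr => hr v hv hvr.symm, hs hv⟩⟩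

lemma isIndepFinset_union [DecidableEq V] {s t : Finset V}
    (hst : ∀ a ∈ s, ∀ b ∈ t, ¬ G.Adj a b) :
    IsIndepFinset G (s ∪ t) ↔ IsIndepFinset G s ∧ IsIndepFinset G t := by
  refine ⟨fun h => ⟨h.mono Finset.subset_union_left, h.mono Finset.subset_union_right⟩, ?_⟩
  rintro ⟨hs, ht⟩ v hv w hw
  rcases Finset.mem_union.mp hv with hv | hv <;> rcases Finset.mem_union.mp hw with hw | hw
  · exact hs hv hw
  · exact hst v hv w hw
  · exact fun h => hst w hw v hv h.symm
  · exact ht hv hw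

variable [Fintype V]

lemma indepPolyOn_empty : indepPolyOn G ∅ = 1 := by
  rw [indepPolyOn, Finset.powerset_empty, Finset.filter_singleton,
    if_pos (show IsIndepFinset G ∅ from fun _ hv => absurd hv (Finset.notMem_empty _)),
    Finset.sum_singleton]
  simp

lemma indepPolyOn_insert [DecidableEq V] {C : Finset V} {r : V} (hr : r ∉ C) :
    indepPolyOn G (insert r C) =
      indepPolyOn G C + X * indepPolyOn G (C.filter (¬ G.Adj r ·)) := by
  simp only [indepPolyOn, Finset.sum_filter, Finset.mul_sum]
  rw [Finset.sum_powerset_insert hr]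
  congr 1
  rw [← Finset.sum_subset (Finset.powerset_mono.mpr (Finset.filter_subset (¬ G.Adj r ·) C))]
  · refine Finset.sum_congr rfl fun t ht => ?_
    have htC : ∀ v ∈ t, v ∈ C ∧ ¬ G.Adj r v := fun v hv =>
      Finset.mem_filter.mp (Finset.mem_powerset.mp ht hv)
    have hrt : r ∉ t := fun h => hr (htC r h).1
    rw [isIndepFinset_insert, and_iff_left fun v hv => (htC v hv).2,
      Finset.card_insert_of_notMem hrt, pow_succ', mul_ite, mul_zero]
  · intro t ht hnot
    obtain ⟨v, hvt, hrv⟩ : ∃ v ∈ t, v ∈ C → G.Adj r v := by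
      simpa [Finset.subset_iff] using hnot
    rw [if_neg fun h =>
      (isIndepFinset_insert.mp h).2 v hvt (hrv (Finset.mem_powerset.mp ht hvt))]

lemma indepPolyOn_union [DecidableEq V] {A B : Finset V} (hAB : Disjoint A B)
    (hsep : ∀ a ∈ A, ∀ b ∈ B, ¬ G.Adj a b) :
    indepPolyOn G (A ∪ B) = indepPolyOn G A * indepPolyOn G B := by
  simp only [indepPolyOn, Finset.sum_filter, Finset.sum_mul_sum, ← Finset.sum_product']
  symm
  refine Finset.sum_nbij' (fun p => p.1 ∪ p.2) (fun s => (s ∩ A, s ∩ B)) ?_ ?_ ?_ ?_ ?_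
  · intro p hp
    simp only [Finset.mem_product, Finset.mem_powerset] at hp ⊢
    exact Finset.union_subset_union hp.1 hp.2
  · intro s hs
    simp only [Finset.mem_product, Finset.mem_powerset] at hs ⊢
    exact ⟨Finset.inter_subset_right, Finset.inter_subset_right⟩
  · intro p hp
    simp only [Finset.mem_product, Finset.mem_powerset] at hp
    have hA : ∀ x, x ∈ p.1 → x ∈ A := fun _ h => hp.1 h
    have hB : ∀ x, x ∈ p.2 → x ∈ B := fun _ h => hp.2 h
    have hAB' : ∀ x, x ∈ A → x ∉ B := fun _ h => Finset.disjoint_left.mp hAB h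
    ext x <;> have := hA x <;> have := hB x <;> have := hAB' x <;>
      simp only [Finset.mem_inter, Finset.mem_union] <;> tauto
  · intro s hs
    simp only [Finset.mem_powerset] at hs
    rw [← Finset.inter_union_distrib_left, Finset.inter_eq_left.mpr hs]
  · intro p hp
    simp only [Finset.mem_product, Finset.mem_powerset] at hp
    have hsep' : ∀ a ∈ p.1, ∀ b ∈ p.2, ¬ G.Adj a b := fun a ha b hb =>
      hsep a (hp.1 ha) b (hp.2 hb)
    rw [isIndepFinset_union hsep', Finset.card_union_of_disjoint (hAB.mono hp.1 hp.2), pow_add,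
      ite_zero_mul_ite_zero]
    congr 1

end IndepPolyOn

lemma div_two_pow_succ (m i : ℕ) : m / 2 ^ (i + 1) = m / 2 ^ i / 2 := by
  rw [Nat.div_div_eq_div_mul, pow_succ]

lemma div_two_pow_add_succ_le (m i k : ℕ) : m / 2 ^ (i + k + 1) ≤ m / 2 ^ i / 2 := by
  rw [add_assoc, pow_add, ← Nat.div_div_eq_div_mul]
  exact Nat.div_le_div_left (Nat.le_self_pow (by omega) 2) two_pos

/-- Node `m` lies in the complete subtree of height `h` rooted at node `n`, in 1-based heap
numbering (vertex `v` of `binTree H` is node `v + 1`). -/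
def InHeapSubtree (n h m : ℕ) : Prop := ∃ i < h, m / 2 ^ i = n

namespace InHeapSubtree

variable {n h m : ℕ}

lemma not_zero : ¬ InHeapSubtree n 0 m := fun ⟨_, hi, _⟩ => Nat.not_lt_zero _ hi

lemma succ_iff : InHeapSubtree n (h + 1) m ↔
    m = n ∨ InHeapSubtree (2 * n) h m ∨ InHeapSubtree (2 * n + 1) h m := by
  constructor
  · rintro ⟨_ | i, hi, hm⟩
    · simpa using Or.inl hm
    · rw [div_two_pow_succ] at hm
      have : m / 2 ^ i = 2 * n ∨ m / 2 ^ i = 2 * n + 1 := by omega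
      exact Or.inr (this.imp (fun h' => ⟨i, by omega, h'⟩) (fun h' => ⟨i, by omega, h'⟩))
  · rintro (rfl | ⟨i, hi, hm⟩ | ⟨i, hi, hm⟩)
    · exact ⟨0, by omega, by simp⟩
    all_goals exact ⟨i + 1, by omega, by rw [div_two_pow_succ, hm]; omega⟩

lemma of_child {c : ℕ} (hc : c / 2 = n) (hm : InHeapSubtree c h m) :
    InHeapSubtree n (h + 1) m := by
  obtain rfl | rfl : c = 2 * n ∨ c = 2 * n + 1 := by omega
  exacts [succ_iff.mpr (Or.inr (Or.inl hm)), succ_iff.mpr (Or.inr (Or.inr hm))]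

lemma of_parent (hm : InHeapSubtree n h (m / 2)) : InHeapSubtree n (h + 1) m := by
  obtain ⟨i, hi, hm⟩ := hm
  exact ⟨i + 1, by omega, by rw [pow_succ', ← Nat.div_div_eq_div_mul, hm]⟩

lemma le (hm : InHeapSubtree n h m) : n ≤ m := by
  obtain ⟨i, -, rfl⟩ := hm
  exact Nat.div_le_self _ _

lemma one_iff : InHeapSubtree 1 h m ↔ 1 ≤ m ∧ m < 2 ^ h := by
  constructor
  · rintro ⟨i, hi, hm⟩
    rw [Nat.div_eq_iff (by positivity)] at hm
    have hpow : 2 ^ (i + 1) ≤ 2 ^ h := Nat.pow_le_pow_right two_pos hi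
    have := Nat.one_le_two_pow (n := i)
    rw [pow_succ] at hpow
    omega
  · rintro ⟨hm1, hmh⟩
    refine ⟨Nat.log 2 m, Nat.log_lt_of_lt_pow (by omega) hmh, ?_⟩
    have hlo := Nat.pow_log_le_self 2 (show m ≠ 0 by omega)
    have hhi := Nat.lt_pow_succ_log_self one_lt_two m
    rw [pow_succ] at hhi
    rw [Nat.div_eq_iff (by positivity)]
    omega

/-- Of the two ancestors `m / 2 ^ i = 2 * n` and `m / 2 ^ j = 2 * n + 1`, the higher one would be
at most `n`. -/
lemma not_sibling (hn : 1 ≤ n) {h' : ℕ} (hm : InHeapSubtree (2 * n) h m) :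
    ¬ InHeapSubtree (2 * n + 1) h' m := by
  rintro ⟨j, -, hj⟩
  obtain ⟨i, -, hi⟩ := hm
  rcases lt_trichotomy i j with hij | rfl | hij
  · obtain ⟨k, rfl⟩ := Nat.exists_eq_add_of_lt hij
    have := div_two_pow_add_succ_le m i k
    omega
  · omega
  · obtain ⟨k, rfl⟩ := Nat.exists_eq_add_of_lt hij
    have := div_two_pow_add_succ_le m j k
    omega

end InHeapSubtree

lemma binTree_adj {H : ℕ} {u v : Fin (2 ^ H - 1)} :
    (binTree H).Adj u v ↔ ((v : ℕ) + 1) / 2 = u + 1 ∨ ((u : ℕ) + 1) / 2 = v + 1 := by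
  simp only [binTree, SimpleGraph.fromRel_adj, ne_eq, Fin.ext_iff]
  omega

noncomputable def binSubtree (H n h : ℕ) : Finset (Fin (2 ^ H - 1)) :=
  Finset.univ.filter fun v => InHeapSubtree n h (v + 1)

section BinSubtree

variable {H n h : ℕ}

@[simp]
lemma mem_binSubtree {v : Fin (2 ^ H - 1)} :
    v ∈ binSubtree H n h ↔ InHeapSubtree n h (v + 1) := by
  simp [binSubtree]

lemma binSubtree_zero : binSubtree H n 0 = ∅ := by
  ext v
  simpa using InHeapSubtree.not_zero

lemma binSubtree_succ {r : Fin (2 ^ H - 1)} (hr : (r : ℕ) + 1 = n) :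
    binSubtree H n (h + 1) =
      insert r (binSubtree H (2 * n) h ∪ binSubtree H (2 * n + 1) h) := by
  subst hr
  ext v
  simp only [mem_binSubtree, InHeapSubtree.succ_iff, Finset.mem_insert, Finset.mem_union,
    Fin.ext_iff, add_left_inj]

lemma root_notMem_binSubtree_children (hn : 1 ≤ n) {r : Fin (2 ^ H - 1)}
    (hr : (r : ℕ) + 1 = n) : r ∉ binSubtree H (2 * n) h ∪ binSubtree H (2 * n + 1) h := by
  simp only [Finset.mem_union, mem_binSubtree]
  rintro (h' | h') <;> have := h'.le <;> omega

lemma binSubtree_filter_not_adj_parent {c : ℕ} {r : Fin (2 ^ H - 1)} (hr : (r : ℕ) + 1 = c / 2) :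
    (binSubtree H c (h + 1)).filter (¬ (binTree H).Adj r ·) =
      binSubtree H (2 * c) h ∪ binSubtree H (2 * c + 1) h := by
  ext v
  simp only [Finset.mem_filter, mem_binSubtree, InHeapSubtree.succ_iff, Finset.mem_union,
    binTree_adj]
  constructor
  · rintro ⟨hv | hv, hadj⟩
    · omega
    · exact hv
  · intro hv
    have : 2 * c ≤ v + 1 := hv.elim (·.le) fun hv => by have := hv.le; omega
    exact ⟨Or.inr hv, by omega⟩

lemma indepPolyOn_union_binSubtree_siblings (hn : 1 ≤ n) {S T : Finset (Fin (2 ^ H - 1))}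
    (hS : S ⊆ binSubtree H (2 * n) h) (hT : T ⊆ binSubtree H (2 * n + 1) h) :
    indepPolyOn (binTree H) (S ∪ T) = indepPolyOn (binTree H) S * indepPolyOn (binTree H) T := by
  have hS' : ∀ a ∈ S, InHeapSubtree (2 * n) h (a + 1) := fun a ha => mem_binSubtree.mp (hS ha)
  have hT' : ∀ b ∈ T, InHeapSubtree (2 * n + 1) h (b + 1) := fun b hb =>
    mem_binSubtree.mp (hT hb)
  refine indepPolyOn_union (Finset.disjoint_left.mpr fun v hvS hvT =>
    (hS' v hvS).not_sibling hn (hT' v hvT)) fun a ha b hb hab => ?_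
  rcases binTree_adj.mp hab with hba | hab
  · exact (InHeapSubtree.of_parent (hba ▸ hS' a ha)).not_sibling hn (hT' b hb)
  · exact (hS' a ha).not_sibling hn (InHeapSubtree.of_parent (hab ▸ hT' b hb))

lemma indepPolyOn_binSubtree_succ (hn : 1 ≤ n) {r : Fin (2 ^ H - 1)} (hr : (r : ℕ) + 1 = n) :
    indepPolyOn (binTree H) (binSubtree H n (h + 1)) =
      indepPolyOn (binTree H) (binSubtree H (2 * n) h) *
          indepPolyOn (binTree H) (binSubtree H (2 * n + 1) h) +
        X * (indepPolyOn (binTree H) ((binSubtree H (2 * n) h).filter (¬ (binTree H).Adj r ·)) *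
          indepPolyOn (binTree H)
            ((binSubtree H (2 * n + 1) h).filter (¬ (binTree H).Adj r ·))) := by
  rw [binSubtree_succ hr, indepPolyOn_insert (root_notMem_binSubtree_children hn hr),
    Finset.filter_union, indepPolyOn_union_binSubtree_siblings hn subset_rfl subset_rfl,
    indepPolyOn_union_binSubtree_siblings hn (Finset.filter_subset _ _)
      (Finset.filter_subset _ _)]

end BinSubtree

noncomputable def binTreePoly : ℕ → ℝ[X]
  | 0 => 1
  | 1 => 1 + X
  | h + 2 => binTreePoly (h + 1) ^ 2 + X * binTreePoly h ^ 4

theorem indepPolyOn_binSubtree {H : ℕ} :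
    ∀ {h n : ℕ}, 1 ≤ n → (∀ m, InHeapSubtree n h m → m < 2 ^ H) →
      indepPolyOn (binTree H) (binSubtree H n h) = binTreePoly h
  | 0, n, _, _ => by rw [binSubtree_zero, indepPolyOn_empty, binTreePoly]
  | h + 1, n, hn, hfit => by
    have hnH : n < 2 ^ H := hfit n ⟨0, h.succ_pos, by simp⟩
    set r : Fin (2 ^ H - 1) := ⟨n - 1, by omega⟩
    rw [indepPolyOn_binSubtree_succ hn (r := r) (by simp only [r]; omega)]
    cases h with
    | zero => simp [binSubtree_zero, indepPolyOn_empty, binTreePoly]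
    | succ k =>
      have child : ∀ c, c / 2 = n →
          indepPolyOn (binTree H) (binSubtree H c (k + 1)) = binTreePoly (k + 1) ∧
          indepPolyOn (binTree H) ((binSubtree H c (k + 1)).filter (¬ (binTree H).Adj r ·)) =
            binTreePoly k ^ 2 := by
        intro c hc
        have hfit_c : ∀ m, InHeapSubtree c (k + 1) m → m < 2 ^ H := fun m hm =>
          hfit m (hm.of_child hc)
        have hfit_gc : ∀ d, d / 2 = c → ∀ m, InHeapSubtree d k m → m < 2 ^ H :=
          fun d hd m hm => hfit_c m (hm.of_child hd)
        refine ⟨indepPolyOn_binSubtree (by omega) hfit_c, ?_⟩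
        rw [binSubtree_filter_not_adj_parent (by simp only [r]; omega),
          indepPolyOn_union_binSubtree_siblings (by omega) subset_rfl subset_rfl,
          indepPolyOn_binSubtree (by omega) (hfit_gc _ (by omega)),
          indepPolyOn_binSubtree (by omega) (hfit_gc _ (by omega)), sq]
      rw [(child (2 * n) (by omega)).1, (child (2 * n + 1) (by omega)).1,
        (child (2 * n) (by omega)).2, (child (2 * n + 1) (by omega)).2, binTreePoly]
      ring

lemma binSubtree_one_self (H : ℕ) : binSubtree H 1 H = Finset.univ := by
  ext v
  simp only [mem_binSubtree, InHeapSubtree.one_iff, Finset.mem_univ, iff_true]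
  omega

lemma indepPoly_binTree (H : ℕ) : indepPoly (binTree H) = binTreePoly H := by
  rw [indepPoly, ← binSubtree_one_self]
  exact indepPolyOn_binSubtree le_rfl fun _ hm => (InHeapSubtree.one_iff.mp hm).2

section Degree

variable {H : ℕ}

lemma binTree_degree_eq_card (v : Fin (2 ^ H - 1)) : (binTree H).degree v =
    ((Finset.range (2 ^ H - 1)).filter fun u : ℕ =>
      (u + 1) / 2 = (v : ℕ) + 1 ∨ ((v : ℕ) + 1) / 2 = u + 1).card := by
  rw [← SimpleGraph.card_neighborFinset_eq_degree, ← Finset.card_map Fin.valEmbedding]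
  congr 1
  ext u
  simp only [Finset.mem_map, SimpleGraph.mem_neighborFinset, binTree_adj, Finset.mem_filter,
    Finset.mem_range, Fin.valEmbedding_apply]
  constructor
  · rintro ⟨a, hadj, rfl⟩
    exact ⟨a.2, hadj⟩
  · rintro ⟨hu, hadj⟩
    exact ⟨⟨u, hu⟩, hadj, rfl⟩

lemma binTree_neighbor_vals_subset (v : Fin (2 ^ H - 1)) :
    ((Finset.range (2 ^ H - 1)).filter fun u : ℕ =>
      (u + 1) / 2 = (v : ℕ) + 1 ∨ ((v : ℕ) + 1) / 2 = u + 1) ⊆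
      {((v : ℕ) + 1) / 2 - 1, 2 * (v : ℕ) + 1, 2 * (v : ℕ) + 2} := by
  intro u
  simp only [Finset.mem_filter, Finset.mem_range, Finset.mem_insert, Finset.mem_singleton]
  omega

lemma binTree_degree_le_three (v : Fin (2 ^ H - 1)) : (binTree H).degree v ≤ 3 := by
  rw [binTree_degree_eq_card]
  exact (Finset.card_le_card (binTree_neighbor_vals_subset v)).trans Finset.card_le_three

lemma binTree_degree_eq_three_iff (v : Fin (2 ^ H - 1)) :
    (binTree H).degree v = 3 ↔ 1 ≤ (v : ℕ) ∧ 2 * (v : ℕ) + 2 < 2 ^ H - 1 := by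
  rw [binTree_degree_eq_card]
  constructor
  · intro h3
    have hall := Finset.eq_of_subset_of_card_le (binTree_neighbor_vals_subset v)
      (h3 ▸ Finset.card_le_three)
    have hparent := hall ▸ Finset.mem_insert_self _ _
    have hchild := hall ▸
      Finset.mem_insert_of_mem (Finset.mem_insert_of_mem (Finset.mem_singleton_self _))
    simp only [Finset.mem_filter, Finset.mem_range] at hparent hchild
    omega
  · rintro ⟨h1, h2⟩
    rw [Finset.card_eq_three]
    refine ⟨((v : ℕ) + 1) / 2 - 1, 2 * (v : ℕ) + 1, 2 * (v : ℕ) + 2,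
      by omega, by omega, by omega, ?_⟩
    ext u
    simp only [Finset.mem_filter, Finset.mem_range, Finset.mem_insert, Finset.mem_singleton]
    omega

end Degree

lemma binTree_maxDegree (h : ℕ) : (binTree (h + 3)).maxDegree = 3 := by
  have h8 : 2 ^ 3 ≤ 2 ^ (h + 3) := Nat.pow_le_pow_right two_pos (by omega)
  refine le_antisymm (SimpleGraph.maxDegree_le_of_forall_degree_le _ _ binTree_degree_le_three) ?_
  calc 3 = (binTree (h + 3)).degree ⟨1, by omega⟩ :=
        ((binTree_degree_eq_three_iff _).mpr
          ⟨le_rfl, show 2 * 1 + 2 < 2 ^ (h + 3) - 1 by omega⟩).symm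
    _ ≤ (binTree (h + 3)).maxDegree := SimpleGraph.degree_le_maxDegree _ _

lemma binTree_filter_degree_eq_maxDegree (h : ℕ) :
    Finset.univ.filter (fun v => (binTree (h + 3)).degree v = (binTree (h + 3)).maxDegree) =
      (binSubtree (h + 3) 1 (h + 2)).erase ⟨0, by simp⟩ := by
  ext v
  simp only [Finset.mem_filter, Finset.mem_univ, true_and, binTree_maxDegree,
    binTree_degree_eq_three_iff, Finset.mem_erase, mem_binSubtree, InHeapSubtree.one_iff,
    ne_eq, Fin.ext_iff]
  have : 2 ^ (h + 3) = 2 * 2 ^ (h + 2) := by ring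
  omega

lemma indepPolyOn_binTree_maxDegree (h : ℕ) :
    indepPolyOn (binTree (h + 3))
        (Finset.univ.filter fun v => (binTree (h + 3)).degree v = (binTree (h + 3)).maxDegree) =
      binTreePoly (h + 1) ^ 2 := by
  have hfit : ∀ c, c / 2 = 1 → ∀ m, InHeapSubtree c (h + 1) m → m < 2 ^ (h + 3) := by
    intro c hc m hm
    have := (InHeapSubtree.one_iff.mp (hm.of_child hc)).2
    have := Nat.pow_le_pow_right two_pos (show h + 1 + 1 ≤ h + 3 by omega)
    omega
  rw [binTree_filter_degree_eq_maxDegree, binSubtree_succ (n := 1) (r := ⟨0, by simp⟩) rfl,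
    Finset.erase_insert (root_notMem_binSubtree_children le_rfl rfl),
    indepPolyOn_union_binSubtree_siblings le_rfl subset_rfl subset_rfl,
    indepPolyOn_binSubtree (by omega) (hfit _ rfl),
    indepPolyOn_binSubtree (by omega) (hfit _ rfl), sq]

/-- The independence polynomials of complete binary trees satisfy
`P_{T_h} = P_{T_{h-1}}² + x · P_{T_{h-2}}⁴` for `h ≥ 2`, with `P_{T_0} = 1` and
`P_{T_1} = 1 + x`; moreover, for `h ≥ 3`,
`P_{T_h*} = P_{T_{h-2}}²`, where `T_h*` is the induced subgraph on the vertices of maximum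
degree (counted via independent sets of `T_h` consisting of maximum-degree vertices). -/
theorem stmt12 :
    (∀ h : ℕ, 2 ≤ h →
      indepPoly (binTree h)
        = indepPoly (binTree (h - 1)) ^ 2 + X * indepPoly (binTree (h - 2)) ^ 4) ∧
    indepPoly (binTree 0) = 1 ∧
    indepPoly (binTree 1) = 1 + X ∧
    ∀ h : ℕ, 3 ≤ h →
      indepPolyOn (binTree h)
          (Finset.univ.filter fun v => (binTree h).degree v = (binTree h).maxDegree)
        = indepPoly (binTree (h - 2)) ^ 2 := by
  simp only [indepPoly_binTree]
  refine ⟨fun h hh => ?_, by rw [binTreePoly], by rw [binTreePoly], fun h hh => ?_⟩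
  · obtain ⟨k, rfl⟩ := Nat.exists_eq_add_of_le' hh
    rw [binTreePoly]
    rfl
  · obtain ⟨k, rfl⟩ := Nat.exists_eq_add_of_le' hh
    exact indepPolyOn_binTree_maxDegree k
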